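/- Let G be a compact group and T, T' two G-stable O_K-lattices in continuous representations V, V' over a finite extension K of Q_p. The relation 'T/π_K^n T ≅ T'/π_K^n T' as (O_K/π_K^n)[G]-modules for some choice of stable lattices' defines a reflexive and symmetric relation on isomorphism classes of d-dimensional representations, but it need not be transitive: there exist (for d = 2, n ≥ 2) representations V_1, V_2, V_3 with V_1 ≡ V_2 mod p^n and V_2 ≡ V_3 mod p^n (via suitable lattices) but no pair of lattices realizing V_1 ≡ V_3 mod p^n. -/

import Mathlib

/-- Two `2`-dimensional representations `ρ, ρ'` of a group `G` over `ℚ_p` are congruent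
modulo `p^n` if there exist `G`-stable lattices in each (encoded by base-change matrices
`P, Q` making the representations integral) whose reductions modulo `p^n` agree, i.e. the
integral matrices are congruent entrywise modulo `p^n`. -/
def CongMod (p : ℕ) [Fact p.Prime] {G : Type*} [Group G] (n : ℕ)
    (ρ ρ' : G →* Matrix.GeneralLinearGroup (Fin 2) ℚ_[p]) : Prop :=
  ∃ P Q : Matrix.GeneralLinearGroup (Fin 2) ℚ_[p],
    (∀ (g : G) (i j : Fin 2), ‖(P⁻¹ * ρ g * P).val i j‖ ≤ 1) ∧
    (∀ (g : G) (i j : Fin 2), ‖(Q⁻¹ * ρ' g * Q).val i j‖ ≤ 1) ∧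
    (∀ (g : G) (i j : Fin 2),
      ‖((P⁻¹ * ρ g * P).val - (Q⁻¹ * ρ' g * Q).val) i j‖ ≤ (p : ℝ) ^ (-(n : ℤ)))

/-- A triple of continuous `2`-dimensional representations of a compact group over `ℚ_p`. -/
structure RepTriple (p : ℕ) [Fact p.Prime] where
  G : Type
  [grp : Group G]
  [top : TopologicalSpace G]
  [tgrp : IsTopologicalGroup G]
  [cpt : CompactSpace G]
  ρ₁ : G →* Matrix.GeneralLinearGroup (Fin 2) ℚ_[p]
  ρ₂ : G →* Matrix.GeneralLinearGroup (Fin 2) ℚ_[p]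
  ρ₃ : G →* Matrix.GeneralLinearGroup (Fin 2) ℚ_[p]
  cont₁ : Continuous fun g => (ρ₁ g).val
  cont₂ : Continuous fun g => (ρ₂ g).val
  cont₃ : Continuous fun g => (ρ₃ g).val

attribute [instance] RepTriple.grp RepTriple.top RepTriple.tgrp RepTriple.cpt

open Matrix

variable {p : ℕ} [Fact p.Prime]

private lemma hp1 : (1:ℝ) < (p:ℝ) := by exact_mod_cast (Fact.out : p.Prime).one_lt
private lemma hp0 : ((p:ℝ)) ≠ 0 := by have := hp1 (p := p); linarith

theorem exists_integral_model {G : Type*} [Group G] [TopologicalSpace G]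
    [CompactSpace G] (ρ : G →* Matrix.GeneralLinearGroup (Fin 2) ℚ_[p])
    (hρ : Continuous fun g => (ρ g).val) :
    ∃ P : Matrix.GeneralLinearGroup (Fin 2) ℚ_[p],
      ∀ g i j, ‖(P⁻¹ * ρ g * P).val i j‖ ≤ 1 := by
  classical
  -- step 1 : a uniform bound
  have hbound : ∀ i j : Fin 2, ∃ a : ℕ, ∀ g, ‖(ρ g).val i j‖ ≤ (p:ℝ) ^ a := by
    intro i j
    have hc : Continuous fun g => ‖(ρ g).val i j‖ :=
      (((continuous_apply j).comp (continuous_apply i)).comp hρ).norm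
    obtain ⟨g₀, -, hg₀⟩ := isCompact_univ.exists_isMaxOn ⟨1, Set.mem_univ 1⟩
      hc.continuousOn
    obtain ⟨a, ha⟩ := pow_unbounded_of_one_lt (R := ℝ) ‖(ρ g₀).val i j‖ (hp1 (p := p))
    exact ⟨a, fun g => le_trans (hg₀ (Set.mem_univ g)) ha.le⟩
  obtain ⟨a, ha⟩ : ∃ a : ℕ, ∀ g (i j : Fin 2), ‖(ρ g).val i j‖ ≤ (p:ℝ) ^ a := by
    choose f hf using hbound
    refine ⟨(f 0 0).max ((f 0 1).max ((f 1 0).max (f 1 1))), fun g i j => ?_⟩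
    refine le_trans (hf i j g) (pow_le_pow_right₀ (hp1 (p := p)).le ?_)
    have h2 : ∀ i j : Fin 2, f i j ≤ (f 0 0).max ((f 0 1).max ((f 1 0).max (f 1 1))) := by
      intro i j
      fin_cases i <;> fin_cases j <;> simp <;> omega
    exact h2 i j
  -- the lattice
  set L : Set (Fin 2 → ℚ_[p]) := {v | ∀ g i, ‖((ρ g).val.mulVec v) i‖ ≤ 1} with hLdef
  have hL1 : ∀ v ∈ L, ∀ i, ‖v i‖ ≤ 1 := by
    intro v hv i
    have := hv 1 i
    rwa [_root_.map_one, Units.val_one, one_mulVec] at this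
  have hLsmul : ∀ (c : ℚ_[p]), ‖c‖ ≤ 1 → ∀ v ∈ L, c • v ∈ L := by
    intro c hc v hv g i
    rw [mulVec_smul, Pi.smul_apply, smul_eq_mul, norm_mul]
    exact mul_le_one₀ hc (norm_nonneg _) (hv g i)
  have hLadd : ∀ v ∈ L, ∀ w ∈ L, v + w ∈ L := by
    intro v hv w hw g i
    rw [mulVec_add, Pi.add_apply]
    exact le_trans (Padic.nonarchimedean _ _) (max_le (hv g i) (hw g i))
  have hLsub : ∀ v ∈ L, ∀ w ∈ L, v - w ∈ L := by
    intro v hv w hw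
    have h := hLadd v hv _ (hLsmul (-1) (by simp) w hw)
    rwa [neg_one_smul, ← sub_eq_add_neg] at h
  have hLstable : ∀ (h : G), ∀ v ∈ L, (ρ h).val.mulVec v ∈ L := by
    intro h v hv g i
    rw [mulVec_mulVec, ← Units.val_mul, ← _root_.map_mul]
    exact hv (g * h) i
  -- scaled standard basis vectors are in L
  have hepa : ∀ j : Fin 2, ((p:ℚ_[p]) ^ a) • (Pi.single j 1 : Fin 2 → ℚ_[p]) ∈ L := by
    intro j g i
    rw [mulVec_smul, Pi.smul_apply, smul_eq_mul, norm_mul, mulVec_single]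
    simp only [MulOpposite.op_one, one_smul, Matrix.col_apply]
    calc ‖(p:ℚ_[p]) ^ a‖ * ‖(ρ g).val i j‖
        ≤ (p:ℝ) ^ (-(a:ℤ)) * (p:ℝ) ^ a := by
          refine mul_le_mul ?_ (ha g i j) (norm_nonneg _) (by positivity)
          rw [Padic.norm_p_pow]
      _ = 1 := by
          rw [← zpow_natCast (p:ℝ) a, ← zpow_add₀ (hp0 (p := p))]
          simp
  -- maximal-norm elements
  have keyfind : ∀ (Ls : Set (Fin 2 → ℚ_[p])) (i : Fin 2),
      (∃ v ∈ Ls, v i ≠ 0) → (∀ v ∈ Ls, ‖v i‖ ≤ 1) →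
      ∃ w ∈ Ls, w i ≠ 0 ∧ ∀ v ∈ Ls, ‖v i‖ ≤ ‖w i‖ := by
    intro Ls i hex hle
    obtain ⟨v₀, hv₀, hv₀ne⟩ := hex
    have hval : ∀ v ∈ Ls, v i ≠ 0 → ‖v i‖ = (p:ℝ) ^ (-((v i).valuation.toNat : ℤ)) := by
      intro v hv hne
      rw [Padic.norm_eq_zpow_neg_valuation hne]
      congr 2
      exact (Int.toNat_of_nonneg ((Padic.norm_le_one_iff_val_nonneg _).1 (hle v hv))).symm
    have hPred : ∃ k : ℕ, ∃ v ∈ Ls, v i ≠ 0 ∧ ‖v i‖ = (p:ℝ) ^ (-(k:ℤ)) :=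
      ⟨(v₀ i).valuation.toNat, v₀, hv₀, hv₀ne, hval v₀ hv₀ hv₀ne⟩
    obtain ⟨w, hw, hwne, hwnorm⟩ := Nat.find_spec hPred
    refine ⟨w, hw, hwne, fun v hv => ?_⟩
    rcases eq_or_ne (v i) 0 with h | h
    · rw [h, norm_zero]; exact norm_nonneg _
    · rw [hval v hv h, hwnorm]
      have : Nat.find hPred ≤ (v i).valuation.toNat :=
        Nat.find_min' hPred ⟨v, hv, h, hval v hv h⟩
      exact zpow_le_zpow_right₀ (hp1 (p := p)).le (by omega)
  have hpQ : ((p:ℚ_[p]) ^ a) ≠ 0 := by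
    apply pow_ne_zero
    exact_mod_cast (Fact.out : p.Prime).ne_zero
  obtain ⟨w₁, hw₁L, hw₁ne, hw₁max⟩ := keyfind L 0
    ⟨_, hepa 0, by simpa using hpQ⟩
    (fun v hv => hL1 v hv 0)
  obtain ⟨w₂, hw₂mem, hw₂ne, hw₂max⟩ := keyfind {v | v ∈ L ∧ v 0 = 0} 1
    ⟨_, ⟨hepa 1, by simp⟩, by simpa using hpQ⟩
    (fun v hv => hL1 v hv.1 1)
  obtain ⟨hw₂L, hw₂0⟩ := hw₂mem
  -- decomposition
  have hdecomp : ∀ v ∈ L, ∃ α β : ℚ_[p], ‖α‖ ≤ 1 ∧ ‖β‖ ≤ 1 ∧ v = α • w₁ + β • w₂ := by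
    intro v hv
    set α := v 0 / w₁ 0 with hαdef
    have hα : ‖α‖ ≤ 1 := by
      rw [hαdef, norm_div]
      exact div_le_one_of_le₀ (hw₁max v hv) (norm_nonneg _)
    have hαw₁ : α * w₁ 0 = v 0 := div_mul_cancel₀ _ hw₁ne
    have hv' : v - α • w₁ ∈ L := hLsub v hv _ (hLsmul α hα w₁ hw₁L)
    have hv'0 : (v - α • w₁) 0 = 0 := by
      simp only [Pi.sub_apply, Pi.smul_apply, smul_eq_mul, hαw₁, sub_self]
    set β := (v - α • w₁) 1 / w₂ 1 with hβdef
    have hβ : ‖β‖ ≤ 1 := by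
      rw [hβdef, norm_div]
      exact div_le_one_of_le₀ (hw₂max _ ⟨hv', hv'0⟩) (norm_nonneg _)
    have hβw₂ : β * w₂ 1 = v 1 - α * w₁ 1 := by
      rw [hβdef, div_mul_cancel₀ _ hw₂ne]; simp
    refine ⟨α, β, hα, hβ, ?_⟩
    funext k
    fin_cases k
    · show v 0 = α * w₁ 0 + β * w₂ 0
      rw [hw₂0, mul_zero, add_zero, hαw₁]
    · show v 1 = α * w₁ 1 + β * w₂ 1
      rw [hβw₂]; ring
  -- the base change matrix
  set Pm : Matrix (Fin 2) (Fin 2) ℚ_[p] := Matrix.of ![![w₁ 0, w₂ 0], ![w₁ 1, w₂ 1]] with hPmdef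
  have hdet : Pm.det = w₁ 0 * w₂ 1 := by
    rw [hPmdef]
    rw [show (Matrix.of ![![w₁ 0, w₂ 0], ![w₁ 1, w₂ 1]]) = !![w₁ 0, w₂ 0; w₁ 1, w₂ 1] from rfl]
    rw [Matrix.det_fin_two_of, hw₂0]; ring
  have hPunit : IsUnit Pm :=
    (Matrix.isUnit_iff_isUnit_det _).mpr
      (by rw [hdet]; exact (mul_ne_zero hw₁ne hw₂ne).isUnit)
  have hPdetunit : IsUnit Pm.det := (Matrix.isUnit_iff_isUnit_det _).mp hPunit
  have hPmul : ∀ c₀ c₁ : ℚ_[p], Pm.mulVec ![c₀, c₁] = c₀ • w₁ + c₁ • w₂ := by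
    intro c₀ c₁
    funext i
    fin_cases i <;>
      simp [hPmdef, Matrix.mulVec, dotProduct, Fin.sum_univ_two, mul_comm]
  refine ⟨hPunit.unit, fun g i j => ?_⟩
  set A := (ρ g).val with hAdef
  have hconj : (hPunit.unit⁻¹ * ρ g * hPunit.unit).val = Pm⁻¹ * A * Pm := by
    rw [Units.val_mul, Units.val_mul, Matrix.coe_units_inv, IsUnit.unit_spec]
  -- column computation
  have hcol : ∀ (c₀ c₁ : ℚ_[p]) (α β : ℚ_[p]),
      A.mulVec (Pm.mulVec ![c₀, c₁]) = Pm.mulVec ![α, β] →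
      (Pm⁻¹ * A * Pm).mulVec ![c₀, c₁] = ![α, β] := by
    intro c₀ c₁ α β h
    rw [← mulVec_mulVec, ← mulVec_mulVec, h, mulVec_mulVec, Matrix.nonsing_inv_mul _ hPdetunit,
      one_mulVec]
  have hentry : ∀ (M : Matrix (Fin 2) (Fin 2) ℚ_[p]) (i : Fin 2),
      M.mulVec ![1, 0] i = M i 0 ∧ M.mulVec ![0, 1] i = M i 1 := by
    intro M i
    constructor <;> simp [Matrix.mulVec, dotProduct, Fin.sum_univ_two]
  have hvb : ∀ (x y : ℚ_[p]), ‖x‖ ≤ 1 → ‖y‖ ≤ 1 → ∀ k : Fin 2,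
      ‖(![x, y] : Fin 2 → ℚ_[p]) k‖ ≤ 1 := by
    intro x y hx hy k
    fin_cases k <;> simpa
  rw [hconj]
  fin_cases j
  · obtain ⟨α, β, hα, hβ, heq⟩ := hdecomp (A.mulVec w₁) (hLstable g w₁ hw₁L)
    have h0 : A.mulVec (Pm.mulVec ![1, 0]) = Pm.mulVec ![α, β] := by
      rw [hPmul, hPmul, one_smul, zero_smul, add_zero, heq]
    have hc := hcol 1 0 α β h0
    have hi := (hentry (Pm⁻¹ * A * Pm) i).1
    rw [hc] at hi
    show ‖(Pm⁻¹ * A * Pm) i 0‖ ≤ 1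
    rw [← hi]
    exact hvb α β hα hβ i
  · obtain ⟨α, β, hα, hβ, heq⟩ := hdecomp (A.mulVec w₂) (hLstable g w₂ hw₂L)
    have h0 : A.mulVec (Pm.mulVec ![0, 1]) = Pm.mulVec ![α, β] := by
      rw [hPmul, hPmul, one_smul, zero_smul, zero_add, heq]
    have hc := hcol 0 1 α β h0
    have hi := (hentry (Pm⁻¹ * A * Pm) i).2
    rw [hc] at hi
    show ‖(Pm⁻¹ * A * Pm) i 1‖ ≤ 1
    rw [← hi]
    exact hvb α β hα hβ i

section Helpers
variable {p : ℕ} [Fact p.Prime]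

private lemma hp1R : (1:ℝ) < (p:ℝ) := by exact_mod_cast (Fact.out : p.Prime).one_lt
private lemma hpQ0 : ((p:ℚ_[p])) ≠ 0 := by
  exact_mod_cast (Nat.cast_ne_zero (R := ℚ_[p])).mpr (Fact.out : p.Prime).ne_zero

/-- ultrametric: `‖1 + x‖ = 1` when `‖x‖ < 1`. -/
private lemma qnorm_one_add (x : ℚ_[p]) (h : ‖x‖ < 1) : ‖1 + x‖ = 1 := by
  rcases le_or_gt ‖1 + x‖ 1 with hle | hgt
  · rcases lt_or_eq_of_le hle with hlt | heq
    · exfalso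
      have h1 : (1:ℝ) = ‖(1 + x) + (-x)‖ := by norm_num
      have h2 : ‖(1 + x) + (-x)‖ ≤ max ‖1 + x‖ ‖-x‖ := Padic.nonarchimedean _ _
      rw [norm_neg] at h2
      have := le_trans h1.le h2
      rcases max_cases ‖1+x‖ ‖x‖ with ⟨he, -⟩ | ⟨he, -⟩ <;> rw [he] at this <;> linarith
    · exact heq
  · exfalso
    have h2 : ‖(1:ℚ_[p]) + x‖ ≤ max ‖(1:ℚ_[p])‖ ‖x‖ := Padic.nonarchimedean _ _
    rw [norm_one] at h2
    rcases max_cases (1:ℝ) ‖x‖ with ⟨he, -⟩ | ⟨he, -⟩ <;> rw [he] at h2 <;> linarith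

private lemma znorm_one_add (x : ℤ_[p]) (h : ‖x‖ < 1) : ‖1 + x‖ = 1 := by
  rw [PadicInt.norm_def] at h ⊢
  push_cast
  exact qnorm_one_add _ h

private lemma norm_p_pow_le_one (k : ℕ) : ‖(p:ℚ_[p])^k‖ ≤ 1 := by
  rw [Padic.norm_p_pow]
  apply zpow_le_one_of_nonpos₀ hp1R.le
  omega

private lemma norm_p_pow_lt_one (k : ℕ) (hk : 1 ≤ k) : ‖(p:ℚ_[p])^k‖ < 1 := by
  rw [Padic.norm_p_pow]
  calc (p:ℝ) ^ (-(k:ℤ)) < (p:ℝ) ^ (0:ℤ) := by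
        apply zpow_lt_zpow_right₀ hp1R
        omega
    _ = 1 := by norm_num

/-- entries of a product of entrywise-bounded matrices. -/
private lemma mul_entry_le {A B : Matrix (Fin 2) (Fin 2) ℚ_[p]} {a b : ℝ}
    (hA : ∀ i j, ‖A i j‖ ≤ a) (hB : ∀ i j, ‖B i j‖ ≤ b)
    (ha : 0 ≤ a) (hb : 0 ≤ b) : ∀ i j, ‖(A * B) i j‖ ≤ a * b := by
  intro i j
  rw [Matrix.mul_apply, Fin.sum_univ_two]
  refine le_trans (Padic.nonarchimedean _ _) (max_le ?_ ?_) <;>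
    · rw [norm_mul]
      exact mul_le_mul (hA _ _) (hB _ _) (norm_nonneg _) ha

/-- entries of the inverse of an entrywise-integral matrix with unit determinant. -/
private lemma inv_entry_le {A : Matrix (Fin 2) (Fin 2) ℚ_[p]}
    (hd : ‖A.det‖ = 1) (h : ∀ i j, ‖A i j‖ ≤ 1) : ∀ i j, ‖A⁻¹ i j‖ ≤ 1 := by
  have hd0 : A.det ≠ 0 := by
    intro h0; rw [h0, norm_zero] at hd; norm_num at hd
  have hdu : IsUnit A.det := isUnit_iff_ne_zero.mpr hd0
  intro i j
  rw [Matrix.inv_def]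
  rw [Matrix.smul_apply, smul_eq_mul, norm_mul, Ring.inverse_eq_inv', norm_inv, hd, inv_one,
    one_mul, Matrix.adjugate_fin_two]
  fin_cases i <;> fin_cases j <;>
    · simp only [Fin.zero_eta, Fin.mk_one, Matrix.cons_val_zero, Matrix.cons_val_one,
        Matrix.head_cons, Matrix.head_fin_const, norm_neg, Matrix.cons_val', Matrix.empty_val',
        Matrix.cons_val_fin_one, Matrix.of_apply]
      first
      | exact h 1 1 | exact h 0 1 | exact h 1 0 | exact h 0 0

end Helpers

section CongSubgroup

variable {p : ℕ} [Fact p.Prime] {H : Type*} [Group H]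

/-- The set of `h` where two `GL₂(ℚ_p)`-valued homomorphisms are entrywise integral with
integral inverses and congruent modulo `ε`, as a subgroup. -/
private def congSubgroup (φ ψ : H →* Matrix.GeneralLinearGroup (Fin 2) ℚ_[p])
    (ε : ℝ) (hε : 0 ≤ ε) (hε1 : ε ≤ 1) : Subgroup H where
  carrier := {h | (∀ i j, ‖(φ h).val i j‖ ≤ 1) ∧ (∀ i j, ‖((φ h)⁻¹).val i j‖ ≤ 1) ∧
    (∀ i j, ‖(ψ h).val i j‖ ≤ 1) ∧ (∀ i j, ‖((ψ h)⁻¹).val i j‖ ≤ 1) ∧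
    (∀ i j, ‖((φ h).val - (ψ h).val) i j‖ ≤ ε)}
  one_mem' := by
    have hone : ∀ i j : Fin 2, ‖(1 : Matrix (Fin 2) (Fin 2) ℚ_[p]) i j‖ ≤ 1 := by
      intro i j
      rw [Matrix.one_apply]
      split <;> simp
    refine ⟨?_, ?_, ?_, ?_, ?_⟩ <;> intro i j <;>
      simp only [_root_.map_one, inv_one, Units.val_one, sub_self] <;> first
        | exact hone i j
        | simpa using hε
  mul_mem' := by
    rintro g h ⟨hg1, hg2, hg3, hg4, hg5⟩ ⟨hh1, hh2, hh3, hh4, hh5⟩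
    have key : ∀ (ρ : H →* Matrix.GeneralLinearGroup (Fin 2) ℚ_[p]),
        (∀ i j, ‖(ρ g).val i j‖ ≤ 1) → (∀ i j, ‖(ρ h).val i j‖ ≤ 1) →
        ∀ i j, ‖(ρ (g * h)).val i j‖ ≤ 1 := by
      intro ρ h1 h2 i j
      rw [_root_.map_mul, Units.val_mul]
      simpa using mul_entry_le h1 h2 zero_le_one zero_le_one i j
    have keyi : ∀ (ρ : H →* Matrix.GeneralLinearGroup (Fin 2) ℚ_[p]),
        (∀ i j, ‖((ρ g)⁻¹).val i j‖ ≤ 1) → (∀ i j, ‖((ρ h)⁻¹).val i j‖ ≤ 1) →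
        ∀ i j, ‖((ρ (g * h))⁻¹).val i j‖ ≤ 1 := by
      intro ρ h1 h2 i j
      rw [_root_.map_mul, _root_.mul_inv_rev, Units.val_mul]
      simpa using mul_entry_le h2 h1 zero_le_one zero_le_one i j
    refine ⟨key φ hg1 hh1, keyi φ hg2 hh2, key ψ hg3 hh3, keyi ψ hg4 hh4, ?_⟩
    have hsplit : (φ (g * h)).val - (ψ (g * h)).val
        = (φ g).val * ((φ h).val - (ψ h).val) + ((φ g).val - (ψ g).val) * (ψ h).val := by
      rw [_root_.map_mul, _root_.map_mul, Units.val_mul, Units.val_mul]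
      noncomm_ring
    intro i j
    rw [hsplit]
    have e1 := mul_entry_le hg1 hh5 zero_le_one hε i j
    have e2 := mul_entry_le hg5 hh3 hε zero_le_one i j
    rw [one_mul] at e1
    rw [mul_one] at e2
    calc ‖((φ g).val * ((φ h).val - (ψ h).val) + ((φ g).val - (ψ g).val) * (ψ h).val) i j‖
        ≤ max ‖((φ g).val * ((φ h).val - (ψ h).val)) i j‖
            ‖(((φ g).val - (ψ g).val) * (ψ h).val) i j‖ := by
          rw [Matrix.add_apply]
          exact Padic.nonarchimedean _ _
      _ ≤ ε := max_le e1 e2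
  inv_mem' := by
    rintro g ⟨hg1, hg2, hg3, hg4, hg5⟩
    have hval : ∀ (ρ : H →* Matrix.GeneralLinearGroup (Fin 2) ℚ_[p]),
        (ρ g⁻¹).val = ((ρ g)⁻¹).val := by intro ρ; rw [map_inv]
    have hvali : ∀ (ρ : H →* Matrix.GeneralLinearGroup (Fin 2) ℚ_[p]),
        ((ρ g⁻¹)⁻¹).val = (ρ g).val := by intro ρ; rw [map_inv, inv_inv]
    refine ⟨?_, ?_, ?_, ?_, ?_⟩
    · intro i j; rw [hval φ]; exact hg2 i j
    · intro i j; rw [hvali φ]; exact hg1 i j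
    · intro i j; rw [hval ψ]; exact hg4 i j
    · intro i j; rw [hvali ψ]; exact hg3 i j
    · have hsplit : (φ g⁻¹).val - (ψ g⁻¹).val
          = ((φ g)⁻¹).val * (((ψ g).val - (φ g).val) * ((ψ g)⁻¹).val) := by
        rw [hval φ, hval ψ]
        have h1 : ((φ g)⁻¹).val * (ψ g).val * ((ψ g)⁻¹).val = ((φ g)⁻¹).val := by
          rw [mul_assoc, ← Units.val_mul, mul_inv_cancel, Units.val_one, mul_one]
        have h2 : ((φ g)⁻¹).val * (φ g).val * ((ψ g)⁻¹).val = ((ψ g)⁻¹).val := by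
          rw [← Units.val_mul, inv_mul_cancel, Units.val_one, one_mul]
        calc ((φ g)⁻¹).val - ((ψ g)⁻¹).val
            = ((φ g)⁻¹).val * (ψ g).val * ((ψ g)⁻¹).val
              - ((φ g)⁻¹).val * (φ g).val * ((ψ g)⁻¹).val := by rw [h1, h2]
          _ = ((φ g)⁻¹).val * (((ψ g).val - (φ g).val) * ((ψ g)⁻¹).val) := by noncomm_ring
      intro i j
      rw [hsplit]
      have hmid : ∀ i j, ‖(((ψ g).val - (φ g).val) * ((ψ g)⁻¹).val) i j‖ ≤ ε := by
        have hdiff : ∀ i j, ‖((ψ g).val - (φ g).val) i j‖ ≤ ε := by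
          intro i j
          have : ((ψ g).val - (φ g).val) i j = -(((φ g).val - (ψ g).val) i j) := by
            simp [Matrix.sub_apply]
          rw [this, norm_neg]
          exact hg5 i j
        have := mul_entry_le hdiff hg4 hε zero_le_one
        simpa using this
      have := mul_entry_le hg2 hmid zero_le_one hε i j
      simpa using this

end CongSubgroup

section Construction

variable (p : ℕ) [Fact p.Prime]

private abbrev MZp (p : ℕ) [Fact p.Prime] := Matrix (Fin 2) (Fin 2) ℤ_[p]
private abbrev GL2 (p : ℕ) [Fact p.Prime] := Matrix.GeneralLinearGroup (Fin 2) ℚ_[p]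
private abbrev HH (p : ℕ) [Fact p.Prime] := (MZp p)ˣ × (MZp p)ˣ

private instance : CompactSpace (MZp p) := Pi.compactSpace
private instance : CompactSpace ((MZp p)ᵐᵒᵖ) := MulOpposite.opHomeomorph.compactSpace

private instance : CompactSpace ((MZp p)ˣ) := by
  rw [← isCompact_univ_iff]
  have he := Units.isEmbedding_embedProduct (M := MZp p)
  rw [he.isCompact_iff]
  have hclosed : IsClosed (Units.embedProduct (MZp p) '' Set.univ) := by
    have : Units.embedProduct (MZp p) '' Set.univ
        = {x : MZp p × (MZp p)ᵐᵒᵖ | x.1 * x.2.unop = 1 ∧ x.2.unop * x.1 = 1} := by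
      ext x
      constructor
      · rintro ⟨u, -, rfl⟩
        exact ⟨u.mul_inv, u.inv_mul⟩
      · rintro ⟨h1, h2⟩
        refine ⟨⟨x.1, x.2.unop, h1, h2⟩, Set.mem_univ _, ?_⟩
        show (x.1, MulOpposite.op x.2.unop) = x
        rw [MulOpposite.op_unop]
    rw [this]
    apply IsClosed.inter
    · exact isClosed_eq
        (continuous_fst.mul (MulOpposite.continuous_unop.comp continuous_snd)) continuous_const
    · exact isClosed_eq
        ((MulOpposite.continuous_unop.comp continuous_snd).mul continuous_fst) continuous_const
  exact hclosed.isCompact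

/-- entrywise coercion as a ring homomorphism. -/
private noncomputable def cm : MZp p →+* Matrix (Fin 2) (Fin 2) ℚ_[p] :=
  (PadicInt.Coe.ringHom).mapMatrix

private lemma cm_apply (m : MZp p) (i j : Fin 2) : cm p m i j = ((m i j : ℤ_[p]) : ℚ_[p]) := by
  simp only [cm, RingHom.mapMatrix_apply, Matrix.map_apply]
  rfl

private lemma cm_le_one (m : MZp p) (i j : Fin 2) : ‖cm p m i j‖ ≤ 1 := by
  rw [cm_apply, PadicInt.padic_norm_e_of_padicInt]
  exact PadicInt.norm_le_one _

private lemma cont_cm : Continuous fun m : MZp p => cm p m := by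
  apply continuous_matrix
  intro i j
  simp only [cm_apply]
  exact continuous_subtype_val.comp ((continuous_apply j).comp (continuous_apply i))

-- the homs on HH
private noncomputable def ρ2H : HH p →* GL2 p :=
  (Units.map (cm p).toMonoidHom).comp (MonoidHom.snd _ _)
private noncomputable def ρ3H : HH p →* GL2 p :=
  (Units.map (cm p).toMonoidHom).comp (MonoidHom.fst _ _)

private lemma ρ2H_val (h : HH p) : (ρ2H p h).val = cm p (h.2.val) := rfl
private lemma ρ3H_val (h : HH p) : (ρ3H p h).val = cm p (h.1.val) := rfl
private lemma ρ2H_inv_val (h : HH p) : ((ρ2H p h)⁻¹).val = cm p ((h.2⁻¹).val) := by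
  rw [← map_inv (ρ2H p)]; rfl
private lemma ρ3H_inv_val (h : HH p) : ((ρ3H p h)⁻¹).val = cm p ((h.1⁻¹).val) := by
  rw [← map_inv (ρ3H p)]; rfl

private lemma cont_ρ2H_val : Continuous fun h : HH p => (ρ2H p h).val := by
  simp only [ρ2H_val]
  exact (cont_cm p).comp (Units.continuous_val.comp continuous_snd)
private lemma cont_ρ3H_val : Continuous fun h : HH p => (ρ3H p h).val := by
  simp only [ρ3H_val]
  exact (cont_cm p).comp (Units.continuous_val.comp continuous_fst)
private lemma cont_ρ2H_inv_val : Continuous fun h : HH p => ((ρ2H p h)⁻¹).val := by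
  simp only [ρ2H_inv_val]
  exact (cont_cm p).comp (Units.continuous_val.comp (continuous_inv.comp continuous_snd))
private lemma cont_ρ3H_inv_val : Continuous fun h : HH p => ((ρ3H p h)⁻¹).val := by
  simp only [ρ3H_inv_val]
  exact (cont_cm p).comp (Units.continuous_val.comp (continuous_inv.comp continuous_fst))

end Construction

section Closedness

variable {p : ℕ} [Fact p.Prime]

private lemma isClosed_congSubgroup {H' : Type*} [Group H'] [TopologicalSpace H']
    (φ ψ : H' →* Matrix.GeneralLinearGroup (Fin 2) ℚ_[p])
    (hφ : Continuous fun h => (φ h).val) (hφi : Continuous fun h => ((φ h)⁻¹).val)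
    (hψ : Continuous fun h => (ψ h).val) (hψi : Continuous fun h => ((ψ h)⁻¹).val)
    (ε : ℝ) (hε : 0 ≤ ε) (hε1 : ε ≤ 1) :
    IsClosed ((congSubgroup φ ψ ε hε hε1 : Subgroup H') : Set H') := by
  have hc : ∀ (f : H' → Matrix (Fin 2) (Fin 2) ℚ_[p]) (c : ℝ), Continuous f →
      IsClosed {h : H' | ∀ i j, ‖f h i j‖ ≤ c} := by
    intro f c hf
    have : {h : H' | ∀ i j, ‖f h i j‖ ≤ c} = ⋂ i, ⋂ j, {h : H' | ‖f h i j‖ ≤ c} := by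
      ext h; simp [Set.mem_iInter]
    rw [this]
    refine isClosed_iInter fun i => isClosed_iInter fun j => ?_
    exact isClosed_le (((continuous_apply j).comp ((continuous_apply i).comp hf)).norm)
      continuous_const
  have : ((congSubgroup φ ψ ε hε hε1 : Subgroup H') : Set H') =
      {h : H' | ∀ i j, ‖(φ h).val i j‖ ≤ 1} ∩ ({h : H' | ∀ i j, ‖((φ h)⁻¹).val i j‖ ≤ 1} ∩
      ({h : H' | ∀ i j, ‖(ψ h).val i j‖ ≤ 1} ∩ ({h : H' | ∀ i j, ‖((ψ h)⁻¹).val i j‖ ≤ 1} ∩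
      {h : H' | ∀ i j, ‖((φ h).val - (ψ h).val) i j‖ ≤ ε}))) := by
    ext h
    constructor
    · rintro ⟨h1, h2, h3, h4, h5⟩
      exact ⟨h1, h2, h3, h4, h5⟩
    · rintro ⟨h1, h2, h3, h4, h5⟩
      exact ⟨h1, h2, h3, h4, h5⟩
  rw [this]
  exact (hc _ 1 hφ).inter ((hc _ 1 hφi).inter ((hc _ 1 hψ).inter
    ((hc _ 1 hψi).inter (hc _ ε (hφ.sub hψ)))))

end Closedness

section Matrices

variable (p : ℕ) [Fact p.Prime] (n : ℕ)

private lemma znorm_p_pow_lt_one (k : ℕ) (hk : 1 ≤ k) : ‖((p:ℤ_[p]))^k‖ < 1 := by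
  rw [PadicInt.norm_def]
  push_cast
  exact norm_p_pow_lt_one k hk

/-- the `ℤ_p`-matrix `A`. -/
private noncomputable def Avz : MZp p := !![1, (p:ℤ_[p])^(2*n-1); 1, 1]
/-- the `ℤ_p`-matrix `M`. -/
private noncomputable def Mvz : MZp p := !![1+(p:ℤ_[p])^n, 0; (p:ℤ_[p])^(n-1), 1]

private lemma Avz_isUnit (hn : 2 ≤ n) : IsUnit (Avz p n) := by
  rw [Matrix.isUnit_iff_isUnit_det, Avz, Matrix.det_fin_two_of, PadicInt.isUnit_iff]
  have : (1 : ℤ_[p]) * 1 - (p:ℤ_[p])^(2*n-1) * 1 = 1 + (-((p:ℤ_[p])^(2*n-1))) := by ring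
  rw [this, znorm_one_add]
  rw [norm_neg]
  exact znorm_p_pow_lt_one p _ (by omega)

private lemma Mvz_isUnit (hn : 2 ≤ n) : IsUnit (Mvz p n) := by
  rw [Matrix.isUnit_iff_isUnit_det, Mvz, Matrix.det_fin_two_of, PadicInt.isUnit_iff]
  have : (1 + (p:ℤ_[p])^n) * 1 - 0 * (p:ℤ_[p])^(n-1) = 1 + (p:ℤ_[p])^n := by ring
  rw [this, znorm_one_add]
  exact znorm_p_pow_lt_one p _ (by omega)

/-- the generator of the compact group. -/
private noncomputable def x₀ (hn : 2 ≤ n) : HH p := ((Avz_isUnit p n hn).unit, (Mvz_isUnit p n hn).unit)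

/-- the compact group: closure of the cyclic subgroup generated by `x₀`. -/
private noncomputable def Gsub (hn : 2 ≤ n) : Subgroup (HH p) :=
  (Subgroup.closure {x₀ p n hn}).topologicalClosure

private instance GsubCompact (hn : 2 ≤ n) : CompactSpace (Gsub p n hn) := by
  exact isCompact_iff_compactSpace.mp ((Subgroup.closure {x₀ p n hn}).isClosed_topologicalClosure).isCompact

end Matrices

section Explicit

variable (p : ℕ) [Fact p.Prime] (n : ℕ)

private lemma entries_fin_two {p : ℕ} [Fact p.Prime] {a b c d : ℚ_[p]} {r : ℝ}
    (ha : ‖a‖ ≤ r) (hb : ‖b‖ ≤ r) (hc : ‖c‖ ≤ r) (hd : ‖d‖ ≤ r) :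
    ∀ i j, ‖(!![a,b;c,d] : Matrix (Fin 2) (Fin 2) ℚ_[p]) i j‖ ≤ r := by
  intro i j; fin_cases i <;> fin_cases j <;> simpa

private lemma fin_two_sub {p : ℕ} [Fact p.Prime] (a b c d e f g h : ℚ_[p]) :
    (!![a,b;c,d] : Matrix (Fin 2) (Fin 2) ℚ_[p]) - !![e,f;g,h] = !![a-e, b-f; c-g, d-h] := by
  ext i j; fin_cases i <;> fin_cases j <;> simp

/-- the matrix giving the lattice diagonalizing `M`. -/
private noncomputable def SU : GL2 p where
  val := !![(p:ℚ_[p]), 0; 1, 1]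
  inv := !![(p:ℚ_[p])⁻¹, 0; -(p:ℚ_[p])⁻¹, 1]
  val_inv := by
    ext i j
    fin_cases i <;> fin_cases j <;>
      simp [Matrix.mul_apply, Fin.sum_univ_two, mul_inv_cancel₀ (hpQ0 (p := p))]
  inv_val := by
    ext i j
    fin_cases i <;> fin_cases j <;>
      simp [Matrix.mul_apply, Fin.sum_univ_two, inv_mul_cancel₀ (hpQ0 (p := p))]

/-- the matrix giving the second lattice for `A`. -/
private noncomputable def QU : GL2 p where
  val := !![(p:ℚ_[p])^(n-1), 0; 0, 1]
  inv := !![((p:ℚ_[p])^(n-1))⁻¹, 0; 0, 1]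
  val_inv := by
    ext i j
    fin_cases i <;> fin_cases j <;>
      simp [Matrix.mul_apply, Fin.sum_univ_two,
        mul_inv_cancel₀ (pow_ne_zero (n-1) (hpQ0 (p := p)))]
  inv_val := by
    ext i j
    fin_cases i <;> fin_cases j <;>
      simp [Matrix.mul_apply, Fin.sum_univ_two,
        inv_mul_cancel₀ (pow_ne_zero (n-1) (hpQ0 (p := p)))]

private lemma cm_Mvz : cm p (Mvz p n) = !![1+(p:ℚ_[p])^n, 0; (p:ℚ_[p])^(n-1), 1] := by
  ext i j
  fin_cases i <;> fin_cases j <;>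
    (rw [cm_apply]; simp [Mvz]; try push_cast; try ring)

private lemma cm_Avz : cm p (Avz p n) = !![1, (p:ℚ_[p])^(2*n-1); 1, 1] := by
  ext i j
  fin_cases i <;> fin_cases j <;>
    (rw [cm_apply]; simp [Avz]; try push_cast; try ring)

private lemma SU_conj_M (hn : 2 ≤ n) :
    ((SU p)⁻¹ * ρ2H p (x₀ p n hn) * SU p).val = !![1+(p:ℚ_[p])^n, 0; 0, 1] := by
  have hval : (ρ2H p (x₀ p n hn)).val = cm p (Mvz p n) := by
    rw [ρ2H_val]
    congr 1
  rw [Units.val_mul, Units.val_mul, hval, cm_Mvz]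
  have hinv : ((SU p)⁻¹).val = !![(p:ℚ_[p])⁻¹, 0; -(p:ℚ_[p])⁻¹, 1] := rfl
  have hv : (SU p).val = !![(p:ℚ_[p]), 0; 1, 1] := rfl
  rw [hinv, hv]
  have e1 : (p:ℚ_[p])^(n-1) * p = (p:ℚ_[p])^n := by
    rw [← pow_succ]
    congr 1
    omega
  ext i j
  fin_cases i <;> fin_cases j
  · simp [Matrix.mul_apply, Fin.sum_univ_two]
    field_simp [hpQ0 (p := p)]
  · simp [Matrix.mul_apply, Fin.sum_univ_two]
  · simp [Matrix.mul_apply, Fin.sum_univ_two]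
    rw [← e1]
    field_simp [hpQ0 (p := p)]
    try ring
  · simp [Matrix.mul_apply, Fin.sum_univ_two]

private lemma QU_conj_A (hn : 2 ≤ n) :
    ((QU p n)⁻¹ * ρ3H p (x₀ p n hn) * QU p n).val = !![1, (p:ℚ_[p])^n; (p:ℚ_[p])^(n-1), 1] := by
  have hval : (ρ3H p (x₀ p n hn)).val = cm p (Avz p n) := by
    rw [ρ3H_val]
    congr 1
  rw [Units.val_mul, Units.val_mul, hval, cm_Avz]
  have hinv : ((QU p n)⁻¹).val = !![((p:ℚ_[p])^(n-1))⁻¹, 0; 0, 1] := rfl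
  have hv : (QU p n).val = !![(p:ℚ_[p])^(n-1), 0; 0, 1] := rfl
  rw [hinv, hv]
  have e2 : (p:ℚ_[p])^(2*n-1) = (p:ℚ_[p])^n * (p:ℚ_[p])^(n-1) := by
    rw [← pow_add]
    congr 1
    omega
  have hne : ((p:ℚ_[p])^(n-1)) ≠ 0 := pow_ne_zero _ (hpQ0 (p := p))
  ext i j
  fin_cases i <;> fin_cases j
  · simp [Matrix.mul_apply, Fin.sum_univ_two]
  · simp [Matrix.mul_apply, Fin.sum_univ_two]
    rw [e2]
    field_simp [hne]
    try ring
  · simp [Matrix.mul_apply, Fin.sum_univ_two]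
  · simp [Matrix.mul_apply, Fin.sum_univ_two]

end Explicit

section Membership

variable (p : ℕ) [Fact p.Prime] (n : ℕ)

private lemma eps_nonneg : (0:ℝ) ≤ (p:ℝ)^(-(n:ℤ)) := by positivity
private lemma eps_le_one : (p:ℝ)^(-(n:ℤ)) ≤ 1 := by
  calc (p:ℝ)^(-(n:ℤ)) ≤ (p:ℝ)^(0:ℤ) := zpow_le_zpow_right₀ hp1R.le (by omega)
    _ = 1 := by norm_num

private lemma one_entry : ∀ i j : Fin 2, ‖(1 : Matrix (Fin 2) (Fin 2) ℚ_[p]) i j‖ ≤ 1 := by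
  intro i j
  rw [Matrix.one_apply]
  split <;> simp

/-- conjugation as a monoid homomorphism. -/
private noncomputable def conjHom (U : GL2 p) : GL2 p →* GL2 p where
  toFun W := U⁻¹ * W * U
  map_one' := by group
  map_mul' a b := by group

private lemma conj_val (U : GL2 p) (χ : HH p →* GL2 p) (h : HH p) :
    (((conjHom p U).comp χ) h).val = (U⁻¹).val * (χ h).val * U.val := rfl

private lemma conj_inv_val (U : GL2 p) (χ : HH p →* GL2 p) (h : HH p) :
    ((((conjHom p U).comp χ) h)⁻¹).val = (U⁻¹).val * ((χ h)⁻¹).val * U.val := by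
  show ((U⁻¹ * χ h * U)⁻¹).val = _
  rw [_root_.mul_inv_rev, _root_.mul_inv_rev, inv_inv]
  rw [Units.val_mul, Units.val_mul]
  noncomm_ring

private lemma cont_conj_val (U : GL2 p) (χ : HH p →* GL2 p)
    (h1 : Continuous fun h : HH p => (χ h).val) :
    Continuous fun h : HH p => (((conjHom p U).comp χ) h).val := by
  simp only [conj_val]
  exact (continuous_const.mul h1).mul continuous_const

private lemma cont_conj_inv_val (U : GL2 p) (χ : HH p →* GL2 p)
    (h1 : Continuous fun h : HH p => ((χ h)⁻¹).val) :
    Continuous fun h : HH p => ((((conjHom p U).comp χ) h)⁻¹).val := by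
  simp only [conj_inv_val]
  exact (continuous_const.mul h1).mul continuous_const

/-- the subgroup witnessing `ρ₁ ≡ ρ₂`. -/
private noncomputable def SG1 : Subgroup (HH p) :=
  congSubgroup (1 : HH p →* GL2 p) ((conjHom p (SU p)).comp (ρ2H p))
    ((p:ℝ)^(-(n:ℤ))) (eps_nonneg p n) (eps_le_one p n)

/-- the subgroup witnessing `ρ₂ ≡ ρ₃`. -/
private noncomputable def SG2 : Subgroup (HH p) :=
  congSubgroup (ρ2H p) ((conjHom p (QU p n)).comp (ρ3H p))
    ((p:ℝ)^(-(n:ℤ))) (eps_nonneg p n) (eps_le_one p n)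

private lemma norm_one_add_pn (hn : 2 ≤ n) : ‖(1:ℚ_[p]) + (p:ℚ_[p])^n‖ = 1 :=
  qnorm_one_add _ (norm_p_pow_lt_one n (by omega))

private lemma x₀_mem_SG1 (hn : 2 ≤ n) : x₀ p n hn ∈ SG1 p n := by
  have hR := SU_conj_M p n hn
  have hRentries : ∀ i j, ‖(!![1+(p:ℚ_[p])^n, 0; 0, 1] : Matrix (Fin 2) (Fin 2) ℚ_[p]) i j‖ ≤ 1 :=
    entries_fin_two (norm_one_add_pn p n hn).le (by simp) (by simp) (by simp)
  refine ⟨?_, ?_, ?_, ?_, ?_⟩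
  · intro i j
    exact one_entry p i j
  · intro i j
    exact one_entry p i j
  · intro i j
    rw [show (((conjHom p (SU p)).comp (ρ2H p)) (x₀ p n hn)).val
      = ((SU p)⁻¹ * ρ2H p (x₀ p n hn) * SU p).val from rfl, hR]
    exact hRentries i j
  · intro i j
    rw [Matrix.coe_units_inv]
    rw [show (((conjHom p (SU p)).comp (ρ2H p)) (x₀ p n hn)).val
      = ((SU p)⁻¹ * ρ2H p (x₀ p n hn) * SU p).val from rfl, hR]
    refine inv_entry_le ?_ hRentries i j
    rw [Matrix.det_fin_two_of]
    simpa using norm_one_add_pn p n hn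
  · intro i j
    rw [show (((conjHom p (SU p)).comp (ρ2H p)) (x₀ p n hn)).val
      = ((SU p)⁻¹ * ρ2H p (x₀ p n hn) * SU p).val from rfl, hR]
    rw [show ((1 : HH p →* GL2 p) (x₀ p n hn)).val = (1 : Matrix (Fin 2) (Fin 2) ℚ_[p]) from rfl]
    rw [Matrix.one_fin_two, fin_two_sub]
    refine entries_fin_two ?_ ?_ ?_ ?_ i j
    · rw [show (1:ℚ_[p]) - (1 + (p:ℚ_[p])^n) = -((p:ℚ_[p])^n) by ring, norm_neg,
        Padic.norm_p_pow]
    · simpa using eps_nonneg p n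
    · simpa using eps_nonneg p n
    · simpa using eps_nonneg p n

private lemma x₀_mem_SG2 (hn : 2 ≤ n) : x₀ p n hn ∈ SG2 p n := by
  have hB := QU_conj_A p n hn
  have hBentries : ∀ i j,
      ‖(!![1, (p:ℚ_[p])^n; (p:ℚ_[p])^(n-1), 1] : Matrix (Fin 2) (Fin 2) ℚ_[p]) i j‖ ≤ 1 :=
    entries_fin_two (by simp) (norm_p_pow_le_one n) (norm_p_pow_le_one (n-1)) (by simp)
  have hMval : (ρ2H p (x₀ p n hn)).val = !![1+(p:ℚ_[p])^n, 0; (p:ℚ_[p])^(n-1), 1] := by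
    rw [ρ2H_val, show ((x₀ p n hn).2 : MZp p) = Mvz p n from IsUnit.unit_spec _, cm_Mvz]
  refine ⟨?_, ?_, ?_, ?_, ?_⟩
  · intro i j
    rw [ρ2H_val]
    exact cm_le_one p _ i j
  · intro i j
    rw [ρ2H_inv_val]
    exact cm_le_one p _ i j
  · intro i j
    rw [show (((conjHom p (QU p n)).comp (ρ3H p)) (x₀ p n hn)).val
      = ((QU p n)⁻¹ * ρ3H p (x₀ p n hn) * QU p n).val from rfl, hB]
    exact hBentries i j
  · intro i j
    rw [Matrix.coe_units_inv]
    rw [show (((conjHom p (QU p n)).comp (ρ3H p)) (x₀ p n hn)).val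
      = ((QU p n)⁻¹ * ρ3H p (x₀ p n hn) * QU p n).val from rfl, hB]
    refine inv_entry_le ?_ hBentries i j
    rw [Matrix.det_fin_two_of]
    have e2 : (p:ℚ_[p])^n * (p:ℚ_[p])^(n-1) = (p:ℚ_[p])^(2*n-1) := by
      rw [← pow_add]
      congr 1
      omega
    rw [e2, show (1:ℚ_[p]) * 1 - (p:ℚ_[p])^(2*n-1) = 1 + (-((p:ℚ_[p])^(2*n-1))) by ring]
    rw [qnorm_one_add]
    rw [norm_neg]
    exact norm_p_pow_lt_one _ (by omega)
  · intro i j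
    rw [show (((conjHom p (QU p n)).comp (ρ3H p)) (x₀ p n hn)).val
      = ((QU p n)⁻¹ * ρ3H p (x₀ p n hn) * QU p n).val from rfl, hB, hMval, fin_two_sub]
    refine entries_fin_two ?_ ?_ ?_ ?_ i j
    · rw [show (1:ℚ_[p]) + (p:ℚ_[p])^n - 1 = (p:ℚ_[p])^n by ring, Padic.norm_p_pow]
    · rw [show (0:ℚ_[p]) - (p:ℚ_[p])^n = -((p:ℚ_[p])^n) by ring, norm_neg,
        Padic.norm_p_pow]
    · simpa using eps_nonneg p n
    · simpa using eps_nonneg p n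

private lemma Gsub_le_SG1 (hn : 2 ≤ n) : Gsub p n hn ≤ SG1 p n := by
  refine Subgroup.topologicalClosure_minimal _ ?_ ?_
  · rw [Subgroup.closure_le]
    simp only [Set.singleton_subset_iff, SetLike.mem_coe]
    exact x₀_mem_SG1 p n hn
  · exact isClosed_congSubgroup _ _ continuous_const continuous_const
      (cont_conj_val p _ _ (cont_ρ2H_val p)) (cont_conj_inv_val p _ _ (cont_ρ2H_inv_val p)) _ _ _

private lemma Gsub_le_SG2 (hn : 2 ≤ n) : Gsub p n hn ≤ SG2 p n := by
  refine Subgroup.topologicalClosure_minimal _ ?_ ?_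
  · rw [Subgroup.closure_le]
    simp only [Set.singleton_subset_iff, SetLike.mem_coe]
    exact x₀_mem_SG2 p n hn
  · exact isClosed_congSubgroup _ _ (cont_ρ2H_val p) (cont_ρ2H_inv_val p)
      (cont_conj_val p _ _ (cont_ρ3H_val p)) (cont_conj_inv_val p _ _ (cont_ρ3H_inv_val p)) _ _ _

end Membership

section Claims

variable (p : ℕ) [Fact p.Prime] (n : ℕ)

private noncomputable def ρ2G (hn : 2 ≤ n) : ↥(Gsub p n hn) →* GL2 p :=
  (ρ2H p).comp (Gsub p n hn).subtype
private noncomputable def ρ3G (hn : 2 ≤ n) : ↥(Gsub p n hn) →* GL2 p :=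
  (ρ3H p).comp (Gsub p n hn).subtype

private lemma cong12 (hn : 2 ≤ n) :
    CongMod p n (1 : ↥(Gsub p n hn) →* GL2 p) (ρ2G p n hn) := by
  refine ⟨1, SU p, ?_, ?_, ?_⟩
  · intro g i j
    simp only [MonoidHom.one_apply, inv_one, one_mul, mul_one, Units.val_one]
    exact one_entry p i j
  · intro g i j
    obtain ⟨-, -, c3, -, -⟩ := Gsub_le_SG1 p n hn g.2
    exact c3 i j
  · intro g i j
    obtain ⟨-, -, -, -, c5⟩ := Gsub_le_SG1 p n hn g.2
    have hleft : ((1 : ↥(Gsub p n hn) →* GL2 p) g) = (1 : GL2 p) := rfl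
    simp only [hleft, inv_one, one_mul, mul_one]
    exact c5 i j

private lemma cong23 (hn : 2 ≤ n) :
    CongMod p n (ρ2G p n hn) (ρ3G p n hn) := by
  refine ⟨1, QU p n, ?_, ?_, ?_⟩
  · intro g i j
    simp only [inv_one, one_mul, mul_one]
    obtain ⟨c1, -, -, -, -⟩ := Gsub_le_SG2 p n hn g.2
    exact c1 i j
  · intro g i j
    obtain ⟨-, -, c3, -, -⟩ := Gsub_le_SG2 p n hn g.2
    exact c3 i j
  · intro g i j
    obtain ⟨-, -, -, -, c5⟩ := Gsub_le_SG2 p n hn g.2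
    simp only [inv_one, one_mul, mul_one]
    exact c5 i j

private lemma notcong13 (hn : 2 ≤ n) :
    ¬ CongMod p n (1 : ↥(Gsub p n hn) →* GL2 p) (ρ3G p n hn) := by
  rintro ⟨P, Q, -, -, h3⟩
  set gx : ↥(Gsub p n hn) := ⟨x₀ p n hn,
    Subgroup.le_topologicalClosure _ (Subgroup.subset_closure (Set.mem_singleton _))⟩ with hgx
  have h3x := h3 gx
  have hp0R : ((p:ℝ)) ≠ 0 := by
    have := hp1R (p := p); linarith
  have hleft : ((P⁻¹ * (1 : ↥(Gsub p n hn) →* GL2 p) gx * P)).val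
      = (1 : Matrix (Fin 2) (Fin 2) ℚ_[p]) := by
    have h1 : (P⁻¹ * (1 : ↥(Gsub p n hn) →* GL2 p) gx * P) = 1 := by
      simp
    rw [h1, Units.val_one]
  rw [hleft] at h3x
  set Aq : Matrix (Fin 2) (Fin 2) ℚ_[p] := !![1, (p:ℚ_[p])^(2*n-1); 1, 1] with hAq
  have hval3 : (ρ3G p n hn gx).val = Aq := by
    show (ρ3H p (x₀ p n hn)).val = Aq
    rw [ρ3H_val, show ((x₀ p n hn).1 : MZp p) = Avz p n from IsUnit.unit_spec _, cm_Avz]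
  set X : Matrix (Fin 2) (Fin 2) ℚ_[p] :=
    (1 : Matrix (Fin 2) (Fin 2) ℚ_[p]) - (Q⁻¹ * ρ3G p n hn gx * Q).val with hXdef
  have hX : ∀ i j, ‖X i j‖ ≤ (p:ℝ)^(-(n:ℤ)) := fun i j => h3x i j
  have hQ1 : (Q⁻¹).val * Q.val = 1 := by
    rw [← Units.val_mul, inv_mul_cancel, Units.val_one]
  have hXfact : X = (Q⁻¹).val * ((1 : Matrix (Fin 2) (Fin 2) ℚ_[p]) - Aq) * Q.val := by
    have hexp : (Q⁻¹).val * ((1 : Matrix (Fin 2) (Fin 2) ℚ_[p]) - Aq) * Q.val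
        = (Q⁻¹).val * Q.val - (Q⁻¹).val * Aq * Q.val := by noncomm_ring
    rw [hexp, hQ1, hXdef, Units.val_mul, Units.val_mul, hval3]
  have hdet1 : X.det = ((1 : Matrix (Fin 2) (Fin 2) ℚ_[p]) - Aq).det := by
    have h2 : ((Q⁻¹).val).det * (Q.val).det = 1 := by
      rw [← Matrix.det_mul, hQ1, Matrix.det_one]
    calc X.det = ((Q⁻¹).val).det * ((1 : Matrix (Fin 2) (Fin 2) ℚ_[p]) - Aq).det * (Q.val).det := by
          rw [hXfact, Matrix.det_mul, Matrix.det_mul]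
      _ = ((1 : Matrix (Fin 2) (Fin 2) ℚ_[p]) - Aq).det * (((Q⁻¹).val).det * (Q.val).det) := by
          ring
      _ = ((1 : Matrix (Fin 2) (Fin 2) ℚ_[p]) - Aq).det := by rw [h2, mul_one]
  have hAqdet : ((1 : Matrix (Fin 2) (Fin 2) ℚ_[p]) - Aq).det = -((p:ℚ_[p])^(2*n-1)) := by
    rw [hAq, Matrix.one_fin_two, fin_two_sub, Matrix.det_fin_two_of]
    ring
  have hnorm1 : ‖X.det‖ = (p:ℝ)^(-((2*n-1:ℕ):ℤ)) := by
    rw [hdet1, hAqdet, norm_neg, Padic.norm_p_pow]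
  have hnorm2 : ‖X.det‖ ≤ (p:ℝ)^(-(n:ℤ)) * (p:ℝ)^(-(n:ℤ)) := by
    rw [Matrix.det_fin_two]
    have hs : ‖X 0 0 * X 1 1 - X 0 1 * X 1 0‖ ≤ max ‖X 0 0 * X 1 1‖ ‖X 0 1 * X 1 0‖ := by
      rw [sub_eq_add_neg]
      refine le_trans (Padic.nonarchimedean _ _) ?_
      rw [norm_neg]
    refine le_trans hs (max_le ?_ ?_) <;>
      · rw [norm_mul]
        exact mul_le_mul (hX _ _) (hX _ _) (norm_nonneg _) (eps_nonneg p n)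
  have hle : (p:ℝ)^(-((2*n-1:ℕ):ℤ)) ≤ (p:ℝ)^(-(n:ℤ) + -(n:ℤ)) := by
    rw [zpow_add₀ hp0R, ← hnorm1]
    exact hnorm2
  have hexp := (zpow_le_zpow_iff_right₀ (hp1R (p := p))).mp hle
  have hc : ((2*n-1:ℕ):ℤ) = 2*(n:ℤ) - 1 := by omega
  omega

end Claims

private noncomputable def Dtriple (p : ℕ) [Fact p.Prime] (n : ℕ) (hn : 2 ≤ n) : RepTriple p where
  G := ↥(Gsub p n hn)
  grp := inferInstance
  top := inferInstance
  tgrp := inferInstance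
  cpt := GsubCompact p n hn
  ρ₁ := 1
  ρ₂ := ρ2G p n hn
  ρ₃ := ρ3G p n hn
  cont₁ := by
    show Continuous fun _ : ↥(Gsub p n hn) => (1 : Matrix (Fin 2) (Fin 2) ℚ_[p])
    exact continuous_const
  cont₂ := (cont_ρ2H_val p).comp continuous_subtype_val
  cont₃ := (cont_ρ3H_val p).comp continuous_subtype_val

/-- Congruence modulo `p^n` of representations (via stable lattices with isomorphic
reductions) is a reflexive and symmetric relation, but for `d = 2` and `n ≥ 2` it fails
to be transitive: there exist continuous representations `ρ₁, ρ₂, ρ₃` of a compact group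
with `ρ₁ ≡ ρ₂` and `ρ₂ ≡ ρ₃ mod p^n` but `ρ₁ ≢ ρ₃ mod p^n`. -/
theorem congruence_refl_symm_not_trans (p : ℕ) [Fact p.Prime] (n : ℕ) (hn : 2 ≤ n) :
    (∀ (G : Type) [Group G] [TopologicalSpace G] [IsTopologicalGroup G] [CompactSpace G]
        (ρ : G →* Matrix.GeneralLinearGroup (Fin 2) ℚ_[p]),
        Continuous (fun g => (ρ g).val) → CongMod p n ρ ρ) ∧
    (∀ (G : Type) [Group G] (ρ ρ' : G →* Matrix.GeneralLinearGroup (Fin 2) ℚ_[p]),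
        CongMod p n ρ ρ' → CongMod p n ρ' ρ) ∧
    (∃ D : RepTriple p, CongMod p n D.ρ₁ D.ρ₂ ∧ CongMod p n D.ρ₂ D.ρ₃ ∧
        ¬ CongMod p n D.ρ₁ D.ρ₃) := by
  refine ⟨?_, ?_, ?_⟩
  · intro G _ _ _ _ ρ hρ
    obtain ⟨P, hP⟩ := exists_integral_model ρ hρ
    refine ⟨P, P, hP, hP, ?_⟩
    intro g i j
    rw [sub_self]
    simpa using eps_nonneg p n
  · rintro G _ ρ ρ' ⟨P, Q, h1, h2, h3⟩
    refine ⟨Q, P, h2, h1, ?_⟩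
    intro g i j
    have := h3 g i j
    have hswap : ((Q⁻¹ * ρ' g * Q).val - (P⁻¹ * ρ g * P).val) i j
        = -(((P⁻¹ * ρ g * P).val - (Q⁻¹ * ρ' g * Q).val) i j) := by
      simp [Matrix.sub_apply]
    rw [hswap, norm_neg]
    exact this
  · exact ⟨Dtriple p n hn, cong12 p n hn, cong23 p n hn, notcong13 p n hn⟩
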